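/- Let (e₁,…,e_n) be an orthonormal basis of X. For I ⊆ {1,…,n}, define the creation operator a_I† : ⋀X → ⋀X by a_I†(M) = e_I ∧ M and the annihilation operator a_I : ⋀X → ⋀X by a_I(M) = e_I ⌟ M. Given I, J, K ⊆ {1,…,n}, set x = J∖(I∪K), y = (I∩K)∖J, a = I∖(J∪K), b = (J∩K)∖I, c = I∩J∩K, d = (I∩J)∖K, and e = K∖(I∪J). Then the supercommutator ⟦a_I†, a_J⟧ := a_I† ∘ a_J − (−1)^{|I|·|J|} a_J ∘ a_I† satisfies: ⟦a_I†, a_J⟧ e_K = 0 if x ∪ y ≠ ∅, and if x ∪ y = ∅ then ⟦a_I†, a_J⟧ e_K = (δ_{d=∅} − δ_{c=∅}) · (−1)^{|d| + ⟨a∪b, d∪e⟩} · e_{a∪c∪e}, where δ_P = 1 if P holds and 0 otherwise, and ⟨P,Q⟩ denotes the number of pairs (p,q) ∈ P×Q with p > q. -/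

import Mathlib

open scoped RealInnerProductSpace

/-- The blade `v₁ ∧ ⋯ ∧ v_k` in the exterior algebra. -/
noncomputable def expBlade {X : Type*} [AddCommGroup X] [Module ℝ X] {k : ℕ}
    (v : Fin k → X) : ExteriorAlgebra ℝ X :=
  (List.ofFn fun i => ExteriorAlgebra.ι ℝ (v i)).prod

/-- The subblade of `v₁ ∧ ⋯ ∧ v_n` with factors indexed by `I`, taken in increasing order. -/
noncomputable def expBladeSub {X : Type*} [AddCommGroup X] [Module ℝ X] {n : ℕ}
    (v : Fin n → X) (I : Finset (Fin n)) : ExteriorAlgebra ℝ X :=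
  ((I.sort (· ≤ ·)).map fun i => ExteriorAlgebra.ι ℝ (v i)).prod

/-- `⟨P,Q⟩`: the number of pairs `(p,q) ∈ P × Q` with `p > q`. -/
def pairsCount {α : Type*} [LinearOrder α] (P Q : Finset α) : ℕ :=
  ((P ×ˢ Q).filter fun z => z.2 < z.1).card

/-!
On basis blades both operators act by signed set operations: `e_S ∧ e_T = (-1)^⟨S,T⟩ e_{S ∪ T}`
for disjoint `S, T` and `e_S ⌟ e_T = (-1)^⟨S, T \ S⟩ e_{T \ S}` for `S ⊆ T`, both vanishing
otherwise. So `e_I ∧ (e_J ⌟ e_K)` survives only if `J ⊆ K` and `I ∩ (K \ J) = ∅`, and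
`e_J ⌟ (e_I ∧ e_K)` only if `I ∩ K = ∅` and `J ⊆ I ∪ K`; a point of `x ∪ y` violates both.
When `x = y = ∅` the two conditions become `d = ∅` and `c = ∅`, both terms are multiples of
`e_{a ∪ c ∪ e}`, and the signs agree modulo 2 because `⟨P,Q⟩ + ⟨Q,P⟩ = |P| |Q|` for disjoint
`P, Q`.
-/

lemma neg_one_pow_eq_of_natCast_eq {R : Type*} [Monoid R] [HasDistribNeg R] {m k : ℕ}
    (h : (m : ZMod 2) = k) : (-1 : R) ^ m = (-1) ^ k :=
  neg_one_pow_congr (by rw [← ZMod.natCast_eq_zero_iff_even, ← ZMod.natCast_eq_zero_iff_even, h])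

section pairsCount

variable {α : Type*} [LinearOrder α]

lemma pairsCount_eq_sum (P Q : Finset α) :
    pairsCount P Q = ∑ p ∈ P, (Q.filter (· < p)).card := by
  rw [pairsCount, Finset.card_filter, Finset.sum_product]
  exact Finset.sum_congr rfl fun p _ => (Finset.card_filter _ _).symm

@[simp]
lemma pairsCount_empty_left (Q : Finset α) : pairsCount ∅ Q = 0 := by
  simp [pairsCount_eq_sum]

lemma card_filter_lt_insert_of_lt {m i : α} {S : Finset α} (hm : ∀ j ∈ S, m < j)
    (hmi : m < i) : ((insert m S).filter (· < i)).card = (S.filter (· < i)).card + 1 := by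
  rw [Finset.filter_insert, if_pos hmi, Finset.card_insert_of_notMem]
  exact fun h => (hm m (Finset.mem_filter.mp h).1).false

lemma pairsCount_insert_left {m : α} {P : Finset α} (Q : Finset α) (h : m ∉ P) :
    pairsCount (insert m P) Q = (Q.filter (· < m)).card + pairsCount P Q := by
  simp [pairsCount_eq_sum, Finset.sum_insert h]

lemma pairsCount_union_left {P P' : Finset α} (Q : Finset α) (h : Disjoint P P') :
    pairsCount (P ∪ P') Q = pairsCount P Q + pairsCount P' Q := by
  simp [pairsCount_eq_sum, Finset.sum_union h]

lemma pairsCount_union_right (P : Finset α) {Q Q' : Finset α} (h : Disjoint Q Q') :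
    pairsCount P (Q ∪ Q') = pairsCount P Q + pairsCount P Q' := by
  simp only [pairsCount_eq_sum, Finset.filter_union, ← Finset.sum_add_distrib]
  exact Finset.sum_congr rfl fun p _ =>
    Finset.card_union_of_disjoint (h.mono (Finset.filter_subset _ _) (Finset.filter_subset _ _))

lemma pairsCount_add_pairsCount_comm {P Q : Finset α} (h : Disjoint P Q) :
    pairsCount P Q + pairsCount Q P = P.card * Q.card := by
  have hswap : pairsCount Q P = ((P ×ˢ Q).filter fun z => ¬ z.2 < z.1).card := by
    refine Finset.card_nbij' Prod.swap Prod.swap ?_ ?_ (fun _ _ => rfl) (fun _ _ => rfl)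
    · rintro ⟨q, p⟩ hz
      simp only [Finset.coe_filter, Finset.mem_product, Set.mem_ofPred_eq] at hz ⊢
      exact ⟨hz.1.symm, hz.2.le.not_gt⟩
    · rintro ⟨p, q⟩ hz
      simp only [Finset.coe_filter, Finset.mem_product, Set.mem_ofPred_eq] at hz ⊢
      have hpq : p ≠ q := Finset.disjoint_left.mp h hz.1.1 ∘ (· ▸ hz.1.2)
      exact ⟨hz.1.symm, lt_of_le_of_ne (not_lt.mp hz.2) hpq⟩
  rw [pairsCount, hswap, Finset.card_filter_add_card_filter_not, Finset.card_product]

lemma natCast_pairsCount_add_pairsCount_comm {P Q : Finset α} (h : Disjoint P Q) :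
    (pairsCount P Q : ZMod 2) + pairsCount Q P = P.card * Q.card := by
  exact_mod_cast congrArg (Nat.cast : ℕ → ZMod 2) (pairsCount_add_pairsCount_comm h)

lemma natCast_card_mul_card_add_pairsCount_add_pairsCount {a b d e : Finset α}
    (hab : Disjoint a b) (had : Disjoint a d) (hae : Disjoint a e) (hbd : Disjoint b d)
    (hbe : Disjoint b e) (hde : Disjoint d e) :
    (((a ∪ d).card * (b ∪ d).card + (pairsCount (a ∪ d) (b ∪ e) + pairsCount (b ∪ d) (a ∪ e)) :
        ℕ) : ZMod 2) =
      (d.card + pairsCount (a ∪ b) (d ∪ e) : ℕ) := by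
  rw [Finset.card_union_of_disjoint had, Finset.card_union_of_disjoint hbd,
    pairsCount_union_left _ had, pairsCount_union_left _ hbd, pairsCount_union_left _ hab,
    pairsCount_union_right _ hbe, pairsCount_union_right _ hbe, pairsCount_union_right _ hae,
    pairsCount_union_right _ hae, pairsCount_union_right _ hde, pairsCount_union_right _ hde]
  push_cast
  linear_combination (norm := ring_nf) natCast_pairsCount_add_pairsCount_comm hab +
    natCast_pairsCount_add_pairsCount_comm had.symm +
    natCast_pairsCount_add_pairsCount_comm hbd.symm + ZMod.pow_card (d.card : ZMod 2)
  reduce_mod_char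

end pairsCount

section blades

variable {X : Type*} [AddCommGroup X] [Module ℝ X] {n : ℕ} (v : Fin n → X)

local notation "ι" => ExteriorAlgebra.ι ℝ

@[simp]
lemma expBladeSub_empty : expBladeSub v ∅ = 1 := by
  simp [expBladeSub]

lemma expBladeSub_insert_of_lt {m : Fin n} {S : Finset (Fin n)} (hm : ∀ j ∈ S, m < j) :
    expBladeSub v (insert m S) = ι (v m) * expBladeSub v S := by
  rw [expBladeSub, Finset.sort_insert _ (fun j hj => (hm j hj).le) fun h => (hm m h).false,
    List.map_cons, List.prod_cons, expBladeSub]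

lemma ι_mul_expBladeSub (i : Fin n) (B : Finset (Fin n)) :
    ι (v i) * expBladeSub v B =
      if i ∈ B then 0 else (-1 : ℝ) ^ (B.filter (· < i)).card • expBladeSub v (insert i B) := by
  induction B using Finset.induction_on_min with
  | empty => simp [expBladeSub, Finset.sort_singleton]
  | insert m S hm ih =>
    rw [expBladeSub_insert_of_lt v hm]
    rcases lt_trichotomy i m with him | rfl | hmi
    · have hi : ∀ j ∈ insert m S, i < j := by
        simpa [him] using fun j hj => him.trans (hm j hj)
      rw [if_neg fun h => (hi i h).false, Finset.filter_false_of_mem fun j hj => (hi j hj).not_gt,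
        Finset.card_empty, pow_zero, one_smul, expBladeSub_insert_of_lt v hi,
        expBladeSub_insert_of_lt v hm]
    · rw [← mul_assoc, ExteriorAlgebra.ι_sq_zero, zero_mul, if_pos (Finset.mem_insert_self _ _)]
    · have hswap : ι (v i) * ι (v m) = -(ι (v m) * ι (v i)) :=
        eq_neg_of_add_eq_zero_left (ExteriorAlgebra.ι_add_mul_swap _ _)
      rw [← mul_assoc, hswap, neg_mul, mul_assoc, ih]
      by_cases hiS : i ∈ S
      · simp [hiS]
      · have hm' : ∀ j ∈ insert i S, m < j := by simpa [hmi] using hm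
        rw [if_neg hiS, if_neg (by simp [hiS, hmi.ne']), mul_smul_comm,
          ← expBladeSub_insert_of_lt v hm', Finset.insert_comm,
          card_filter_lt_insert_of_lt hm hmi, pow_succ, mul_neg_one, neg_smul]

lemma expBladeSub_mul_expBladeSub (A B : Finset (Fin n)) :
    expBladeSub v A * expBladeSub v B =
      if Disjoint A B then (-1 : ℝ) ^ pairsCount A B • expBladeSub v (A ∪ B) else 0 := by
  induction A using Finset.induction_on_min with
  | empty => simp
  | insert m S hm ih =>
    have hmS : m ∉ S := fun h => (hm m h).false
    rw [expBladeSub_insert_of_lt v hm, mul_assoc, ih]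
    by_cases hSB : Disjoint S B
    · have hfilter : ((S ∪ B).filter (· < m)) = B.filter (· < m) := by
        rw [Finset.filter_union, Finset.filter_false_of_mem fun j hj => (hm j hj).not_gt,
          Finset.empty_union]
      rw [if_pos hSB, mul_smul_comm, ι_mul_expBladeSub, hfilter,
        pairsCount_insert_left _ hmS, Finset.insert_union]
      by_cases hmB : m ∈ B
      · simp [hmB]
      · rw [if_neg (by simp [hmB, hmS]),
          if_pos (Finset.disjoint_insert_left.mpr ⟨hmB, hSB⟩), smul_smul, ← pow_add, add_comm]
    · rw [if_neg hSB, mul_zero, if_neg fun h => hSB (h.mono_left (Finset.subset_insert _ _))]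

end blades

section contraction

variable {X : Type*} [NormedAddCommGroup X] [InnerProductSpace ℝ X] {n : ℕ} {v : Fin n → X}

local notation "ι" => ExteriorAlgebra.ι ℝ

lemma lc_expBladeSub (hv : Orthonormal ℝ v)
    {ginv : ExteriorAlgebra ℝ X →ₐ[ℝ] ExteriorAlgebra ℝ X} (hginv : ∀ w : X, ginv (ι w) = -ι w)
    {lc : X → ExteriorAlgebra ℝ X →ₗ[ℝ] ExteriorAlgebra ℝ X} (hlc_one : ∀ w : X, lc w 1 = 0)
    (hlc_vec : ∀ w w' : X, lc w (ι w') = algebraMap ℝ (ExteriorAlgebra ℝ X) ⟪w, w'⟫)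
    (hlc_mul : ∀ (w : X) (M N : ExteriorAlgebra ℝ X), lc w (M * N) = lc w M * N + ginv M * lc w N)
    (i : Fin n) (T : Finset (Fin n)) :
    lc (v i) (expBladeSub v T) =
      if i ∈ T then (-1 : ℝ) ^ (T.filter (· < i)).card • expBladeSub v (T.erase i) else 0 := by
  induction T using Finset.induction_on_min with
  | empty => simp [hlc_one]
  | insert m S hm ih =>
    have hmS : m ∉ S := fun h => (hm m h).false
    rw [expBladeSub_insert_of_lt v hm, hlc_mul, hlc_vec, hginv, orthonormal_iff_ite.mp hv, ih]
    by_cases him : i = m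
    · subst him
      rw [if_neg hmS, if_pos (Finset.mem_insert_self _ _), Finset.filter_insert,
        if_neg (lt_irrefl _), Finset.filter_false_of_mem fun j hj => (hm j hj).not_gt, Finset.erase_insert hmS]
      simp
    · rw [if_neg him, map_zero, zero_mul, zero_add, neg_mul]
      by_cases hiS : i ∈ S
      · have hmi : m < i := hm i hiS
        have hm' : ∀ j ∈ S.erase i, m < j := fun j hj => hm j (Finset.mem_of_mem_erase hj)
        rw [if_pos hiS, if_pos (Finset.mem_insert_of_mem hiS), mul_smul_comm,
          ← expBladeSub_insert_of_lt v hm', ← Finset.erase_insert_of_ne (Ne.symm him),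
          card_filter_lt_insert_of_lt hm hmi, pow_succ, mul_neg_one, neg_smul]
      · rw [if_neg hiS, if_neg (by simp [him, hiS]), mul_zero, neg_zero]

lemma LC_expBladeSub {lc : X → ExteriorAlgebra ℝ X →ₗ[ℝ] ExteriorAlgebra ℝ X}
    (hlc : ∀ (i : Fin n) (T : Finset (Fin n)), lc (v i) (expBladeSub v T) =
      if i ∈ T then (-1 : ℝ) ^ (T.filter (· < i)).card • expBladeSub v (T.erase i) else 0)
    {LC : ExteriorAlgebra ℝ X →ₗ[ℝ] ExteriorAlgebra ℝ X →ₗ[ℝ] ExteriorAlgebra ℝ X}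
    (hLC_one : ∀ N : ExteriorAlgebra ℝ X, LC 1 N = N)
    (hLC_mul : ∀ (w : X) (M N : ExteriorAlgebra ℝ X), LC (ι w * M) N = LC M (lc w N))
    (S T : Finset (Fin n)) :
    LC (expBladeSub v S) (expBladeSub v T) =
      if S ⊆ T then (-1 : ℝ) ^ pairsCount S (T \ S) • expBladeSub v (T \ S) else 0 := by
  induction S using Finset.induction_on_min generalizing T with
  | empty => simp [hLC_one]
  | insert m S hm ih =>
    have hmS : m ∉ S := fun h => (hm m h).false
    rw [expBladeSub_insert_of_lt v hm, hLC_mul, hlc]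
    by_cases hmT : m ∈ T
    · have hsub : S ⊆ T.erase m ↔ S ⊆ T := by simp [Finset.subset_erase, hmS]
      have hsdiff : T.erase m \ S = T \ insert m S := by
        rw [Finset.sdiff_insert, Finset.erase_sdiff_comm]
      have hfilter : T.filter (· < m) = (T \ insert m S).filter (· < m) := by
        ext j
        simp only [Finset.mem_filter, Finset.mem_sdiff, Finset.mem_insert]
        exact ⟨fun h => ⟨⟨h.1, fun h' => h'.elim h.2.ne fun hjS => (hm j hjS).not_gt h.2⟩, h.2⟩,
          fun h => ⟨h.1.1, h.2⟩⟩
      rw [if_pos hmT, map_smul, ih, hsdiff, pairsCount_insert_left _ hmS]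
      by_cases hST : S ⊆ T
      · rw [if_pos (hsub.mpr hST), if_pos (Finset.insert_subset hmT hST), smul_smul, ← pow_add,
          hfilter]
      · rw [if_neg (mt hsub.mp hST), if_neg fun h => hST (Finset.insert_subset_iff.mp h).2,
          smul_zero]
    · rw [if_neg hmT, map_zero, if_neg fun h => hmT (h (Finset.mem_insert_self _ _))]

end contraction

section supercommutator

variable {X : Type*} [AddCommGroup X] [Module ℝ X] {n : ℕ} {v : Fin n → X}
  {LC : ExteriorAlgebra ℝ X →ₗ[ℝ] ExteriorAlgebra ℝ X →ₗ[ℝ] ExteriorAlgebra ℝ X}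
  {I J K a b c d e : Finset (Fin n)}
  (hLC : ∀ S T : Finset (Fin n), LC (expBladeSub v S) (expBladeSub v T) =
    if S ⊆ T then (-1 : ℝ) ^ pairsCount S (T \ S) • expBladeSub v (T \ S) else 0)

include hLC

lemma expBladeSub_mul_LC_expBladeSub :
    expBladeSub v I * LC (expBladeSub v J) (expBladeSub v K) =
      if J ⊆ K ∧ Disjoint I (K \ J) then
        (-1 : ℝ) ^ (pairsCount J (K \ J) + pairsCount I (K \ J)) • expBladeSub v (I ∪ K \ J)
      else 0 := by
  rw [hLC]
  by_cases hJK : J ⊆ K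
  · rw [if_pos hJK, mul_smul_comm, expBladeSub_mul_expBladeSub]
    by_cases hI : Disjoint I (K \ J)
    · rw [if_pos hI, if_pos ⟨hJK, hI⟩, smul_smul, pow_add]
    · rw [if_neg hI, if_neg fun h => hI h.2, smul_zero]
  · rw [if_neg hJK, if_neg fun h => hJK h.1, mul_zero]

lemma LC_expBladeSub_expBladeSub_mul_expBladeSub :
    LC (expBladeSub v J) (expBladeSub v I * expBladeSub v K) =
      if Disjoint I K ∧ J ⊆ I ∪ K then
        (-1 : ℝ) ^ (pairsCount I K + pairsCount J ((I ∪ K) \ J)) • expBladeSub v ((I ∪ K) \ J)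
      else 0 := by
  rw [expBladeSub_mul_expBladeSub]
  by_cases hIK : Disjoint I K
  · rw [if_pos hIK, map_smul, hLC]
    by_cases hJ : J ⊆ I ∪ K
    · rw [if_pos hJ, if_pos ⟨hIK, hJ⟩, smul_smul, pow_add]
    · rw [if_neg hJ, if_neg fun h => hJ h.2, smul_zero]
  · rw [if_neg hIK, if_neg fun h => hIK h.1, map_zero]

lemma creation_annihilation_expBladeSub
    (hx : J ⊆ I ∪ K) (hy : I ∩ K ⊆ J)
    (ha : a = I \ (J ∪ K)) (hb : b = (J ∩ K) \ I) (hc : c = I ∩ J ∩ K) (hd : d = (I ∩ J) \ K)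
    (he : e = K \ (I ∪ J)) :
    expBladeSub v I * LC (expBladeSub v J) (expBladeSub v K) =
      ((if d = ∅ then 1 else 0) * (-1 : ℝ) ^ (d.card + pairsCount (a ∪ b) (d ∪ e))) •
        expBladeSub v (a ∪ c ∪ e) := by
  rw [expBladeSub_mul_LC_expBladeSub hLC]
  by_cases hd0 : d = ∅
  · have hIJ : ∀ t ∈ I, t ∈ J → t ∈ K := by
      simpa [hd, Finset.eq_empty_iff_forall_notMem] using hd0
    have hJK : J ⊆ K := by grind
    have hKJ : K \ J = e := by ext t; grind
    have hIac : I = a ∪ c := by ext t; grind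
    have hJbc : J = b ∪ c := by ext t; grind
    have hab : Disjoint a b := by grind [Finset.disjoint_left]
    have hac : Disjoint a c := by grind [Finset.disjoint_left]
    have hbc : Disjoint b c := by grind [Finset.disjoint_left]
    have hIe : Disjoint I e := by grind [Finset.disjoint_left]
    rw [if_pos ⟨hJK, hKJ ▸ hIe⟩, if_pos hd0, one_mul, hKJ, hIac, hJbc, hd0, Finset.card_empty,
      Finset.empty_union, zero_add]
    congr 1
    refine neg_one_pow_eq_of_natCast_eq ?_
    rw [pairsCount_union_left _ hab, pairsCount_union_left _ hac, pairsCount_union_left _ hbc]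
    push_cast
    ring_nf
    reduce_mod_char
  · rw [if_neg fun h => hd0 (by grind), if_neg hd0, zero_mul, zero_smul]

lemma annihilation_creation_expBladeSub
    (hx : J ⊆ I ∪ K) (hy : I ∩ K ⊆ J)
    (ha : a = I \ (J ∪ K)) (hb : b = (J ∩ K) \ I) (hc : c = I ∩ J ∩ K) (hd : d = (I ∩ J) \ K)
    (he : e = K \ (I ∪ J)) :
    (-1 : ℝ) ^ (I.card * J.card) • LC (expBladeSub v J) (expBladeSub v I * expBladeSub v K) =
      ((if c = ∅ then 1 else 0) * (-1 : ℝ) ^ (d.card + pairsCount (a ∪ b) (d ∪ e))) •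
        expBladeSub v (a ∪ c ∪ e) := by
  rw [LC_expBladeSub_expBladeSub_mul_expBladeSub hLC]
  by_cases hc0 : c = ∅
  · have hIJK : ∀ t ∈ I, t ∈ J → t ∉ K := by
      simpa [hc, Finset.eq_empty_iff_forall_notMem] using hc0
    have hIK : Disjoint I K := by grind [Finset.disjoint_left]
    have hIKJ : (I ∪ K) \ J = a ∪ e := by ext t; grind
    have hIad : I = a ∪ d := by ext t; grind
    have hJbd : J = b ∪ d := by ext t; grind
    have hKbe : K = b ∪ e := by ext t; grind
    have hab : Disjoint a b := by grind [Finset.disjoint_left]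
    have had : Disjoint a d := by grind [Finset.disjoint_left]
    have hae : Disjoint a e := by grind [Finset.disjoint_left]
    have hbd : Disjoint b d := by grind [Finset.disjoint_left]
    have hbe : Disjoint b e := by grind [Finset.disjoint_left]
    have hde : Disjoint d e := by grind [Finset.disjoint_left]
    rw [if_pos ⟨hIK, hx⟩, if_pos hc0, one_mul, smul_smul, ← pow_add, hc0, Finset.union_empty, hIKJ]
    congr 1
    rw [hIad, hJbd, hKbe]
    exact neg_one_pow_eq_of_natCast_eq
      (natCast_card_mul_card_add_pairsCount_add_pairsCount hab had hae hbd hbe hde)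
  · rw [if_neg fun h => hc0 (by grind [Finset.disjoint_left]), if_neg hc0, zero_mul, zero_smul,
      smul_zero]

end supercommutator

theorem stmt19_general {X : Type*} [NormedAddCommGroup X] [InnerProductSpace ℝ X]
    {n : ℕ} (eb : OrthonormalBasis (Fin n) ℝ X)
    -- the grade involution: the unique algebra automorphism with `v̂ = -v` on vectors
    (ginv : ExteriorAlgebra ℝ X →ₐ[ℝ] ExteriorAlgebra ℝ X)
    (hginv : ∀ v : X, ginv (ExteriorAlgebra.ι ℝ v) = - ExteriorAlgebra.ι ℝ v)
    -- the left contraction by a vector, characterized by its defining properties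
    (lc : X → ExteriorAlgebra ℝ X →ₗ[ℝ] ExteriorAlgebra ℝ X)
    (hlc_one : ∀ v : X, lc v 1 = 0)
    (hlc_vec : ∀ v w : X, lc v (ExteriorAlgebra.ι ℝ w) = algebraMap ℝ (ExteriorAlgebra ℝ X) ⟪v, w⟫)
    (hlc_mul : ∀ (v : X) (M N : ExteriorAlgebra ℝ X),
      lc v (M * N) = lc v M * N + ginv M * lc v N)
    -- the left contraction `LC M N = M ⌟ N`, extended (bi)linearly in the contractor `M`
    (LC : ExteriorAlgebra ℝ X →ₗ[ℝ] ExteriorAlgebra ℝ X →ₗ[ℝ] ExteriorAlgebra ℝ X)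
    (hLC_one : ∀ N : ExteriorAlgebra ℝ X, LC 1 N = N)
    (hLC_mul : ∀ (v : X) (M N : ExteriorAlgebra ℝ X),
      LC (ExteriorAlgebra.ι ℝ v * M) N = LC M (lc v N))
    (I J K : Finset (Fin n))
    (x y a b c d e' : Finset (Fin n))
    (hx : x = J \ (I ∪ K)) (hy : y = (I ∩ K) \ J)
    (ha : a = I \ (J ∪ K)) (hb : b = (J ∩ K) \ I)
    (hc : c = I ∩ J ∩ K) (hd : d = (I ∩ J) \ K)
    (he : e' = K \ (I ∪ J))
    -- `scomm = ⟦a_I†, a_J⟧ e_K`, where `a_I† M = e_I ∧ M`, `a_J M = e_J ⌟ M`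
    (scomm : ExteriorAlgebra ℝ X)
    (hscomm : scomm =
      expBladeSub (fun i => eb i) I * LC (expBladeSub (fun i => eb i) J)
          (expBladeSub (fun i => eb i) K) -
        ((-1 : ℝ) ^ (I.card * J.card)) •
          LC (expBladeSub (fun i => eb i) J)
            (expBladeSub (fun i => eb i) I * expBladeSub (fun i => eb i) K)) :
    (x ∪ y ≠ ∅ → scomm = 0) ∧
    (x ∪ y = ∅ → scomm =
      (((if d = ∅ then (1 : ℝ) else 0) - (if c = ∅ then (1 : ℝ) else 0)) *
          (-1 : ℝ) ^ (d.card + pairsCount (a ∪ b) (d ∪ e'))) •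
        expBladeSub (fun i => eb i) (a ∪ c ∪ e')) := by
  have hLC := LC_expBladeSub (lc_expBladeSub eb.orthonormal hginv hlc_one hlc_vec hlc_mul)
    hLC_one hLC_mul
  subst hscomm
  refine ⟨fun hxy => ?_, fun hxy => ?_⟩
  · obtain ⟨t, ht⟩ := Finset.nonempty_iff_ne_empty.mpr hxy
    rw [expBladeSub_mul_LC_expBladeSub hLC, LC_expBladeSub_expBladeSub_mul_expBladeSub hLC,
      if_neg (by grind [Finset.disjoint_left]), if_neg (by grind [Finset.disjoint_left]),
      smul_zero, sub_zero]
  · obtain ⟨hx0, hy0⟩ := Finset.union_eq_empty.mp hxy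
    have hJ : J ⊆ I ∪ K := Finset.sdiff_eq_empty_iff_subset.mp (hx ▸ hx0)
    have hIK : I ∩ K ⊆ J := Finset.sdiff_eq_empty_iff_subset.mp (hy ▸ hy0)
    rw [creation_annihilation_expBladeSub hLC hJ hIK ha hb hc hd he,
      annihilation_creation_expBladeSub hLC hJ hIK ha hb hc hd he, ← sub_smul, ← sub_mul]

/-- the supercommutator `⟦a_I†, a_J⟧` of multi-fermion creation and
annihilation operators, evaluated on a basis multivector `e_K`. -/
theorem stmt19 {X : Type*} [NormedAddCommGroup X] [InnerProductSpace ℝ X]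
    [FiniteDimensional ℝ X]
    {n : ℕ} (eb : OrthonormalBasis (Fin n) ℝ X)
    -- the grade involution: the unique algebra automorphism with `v̂ = -v` on vectors
    (ginv : ExteriorAlgebra ℝ X →ₐ[ℝ] ExteriorAlgebra ℝ X)
    (hginv : ∀ v : X, ginv (ExteriorAlgebra.ι ℝ v) = - ExteriorAlgebra.ι ℝ v)
    -- the left contraction by a vector, characterized by its defining properties
    (lc : X → ExteriorAlgebra ℝ X →ₗ[ℝ] ExteriorAlgebra ℝ X)
    (hlc_one : ∀ v : X, lc v 1 = 0)
    (hlc_vec : ∀ v w : X, lc v (ExteriorAlgebra.ι ℝ w) = algebraMap ℝ (ExteriorAlgebra ℝ X) ⟪v, w⟫)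
    (hlc_mul : ∀ (v : X) (M N : ExteriorAlgebra ℝ X),
      lc v (M * N) = lc v M * N + ginv M * lc v N)
    -- the left contraction `LC M N = M ⌟ N`, extended (bi)linearly in the contractor `M`
    (LC : ExteriorAlgebra ℝ X →ₗ[ℝ] ExteriorAlgebra ℝ X →ₗ[ℝ] ExteriorAlgebra ℝ X)
    (hLC_one : ∀ N : ExteriorAlgebra ℝ X, LC 1 N = N)
    (hLC_vec : ∀ (v : X) (N : ExteriorAlgebra ℝ X), LC (ExteriorAlgebra.ι ℝ v) N = lc v N)
    (hLC_mul : ∀ (v : X) (M N : ExteriorAlgebra ℝ X),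
      LC (ExteriorAlgebra.ι ℝ v * M) N = LC M (lc v N))
    (I J K : Finset (Fin n))
    (x y a b c d e' : Finset (Fin n))
    (hx : x = J \ (I ∪ K)) (hy : y = (I ∩ K) \ J)
    (ha : a = I \ (J ∪ K)) (hb : b = (J ∩ K) \ I)
    (hc : c = I ∩ J ∩ K) (hd : d = (I ∩ J) \ K)
    (he : e' = K \ (I ∪ J))
    -- `scomm = ⟦a_I†, a_J⟧ e_K`, where `a_I† M = e_I ∧ M`, `a_J M = e_J ⌟ M`
    (scomm : ExteriorAlgebra ℝ X)
    (hscomm : scomm =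
      expBladeSub (fun i => eb i) I * LC (expBladeSub (fun i => eb i) J)
          (expBladeSub (fun i => eb i) K) -
        ((-1 : ℝ) ^ (I.card * J.card)) •
          LC (expBladeSub (fun i => eb i) J)
            (expBladeSub (fun i => eb i) I * expBladeSub (fun i => eb i) K)) :
    (x ∪ y ≠ ∅ → scomm = 0) ∧
    (x ∪ y = ∅ → scomm =
      (((if d = ∅ then (1 : ℝ) else 0) - (if c = ∅ then (1 : ℝ) else 0)) *
          (-1 : ℝ) ^ (d.card + pairsCount (a ∪ b) (d ∪ e'))) •
        expBladeSub (fun i => eb i) (a ∪ c ∪ e')) :=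
  stmt19_general eb ginv hginv lc hlc_one hlc_vec hlc_mul LC hLC_one hLC_mul I J K x y a b c d e' hx
    hy ha hb hc hd he scomm hscomm
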